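/- Let e be the exponent of A and let M = span(Φ) ⊆ ℂ[A] be an irreducible G-subrepresentation spanned by a set Φ of characters of A. The character χ_M of the G-representation M takes values in the cyclotomic field ℚ(ζ_e), and the Galois group Gal(ℚ(ζ_e)/ℚ) acts on characters of A by post-composition. For τ ∈ Gal(ℚ(ζ_e)/ℚ), one has τ∘χ_M = χ_M if and only if τ permutes the elements of Φ, i.e. {τ∘χ : χ ∈ Φ} = Φ. -/

import Mathlib

noncomputable section

variable {A : Type*} [CommGroup A] [Fintype A]

/-- The semidirect product `G = A ⋊ H`, for `H` a subgroup of `Aut(A)`. -/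
abbrev Gsd (H : Subgroup (MulAut A)) : Type _ := A ⋊[H.subtype] H

/-- The `G`-representation on `ℂ[A] = (A → ℂ)`: `a₀ ∈ A` acts by `(a₀·f)(x) = f(x·a₀)` and
`h ∈ H` acts by `(h·f)(x) = f(h⁻¹ x)`. -/
def rho (H : Subgroup (MulAut A)) (g : Gsd H) : (A → ℂ) →ₗ[ℂ] (A → ℂ) where
  toFun f := fun x => f (((g.right : MulAut A))⁻¹ (x * g.left))
  map_add' _ _ := rfl
  map_smul' _ _ := rfl

/-- `M` is a `G`-subrepresentation of `ℂ[A]`. -/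
def IsSubrep (H : Subgroup (MulAut A)) (M : Submodule ℂ (A → ℂ)) : Prop :=
  ∀ (g : Gsd H) (f : A → ℂ), f ∈ M → rho H g f ∈ M

/-- `M` is an irreducible `G`-subrepresentation of `ℂ[A]`. -/
def IsIrred (H : Subgroup (MulAut A)) (M : Submodule ℂ (A → ℂ)) : Prop :=
  M ≠ ⊥ ∧ ∀ N : Submodule ℂ (A → ℂ), N ≤ M → IsSubrep H N → N = ⊥ ∨ N = M

/-- A character `χ : A →* ℂ` regarded as an element of `ℂ[A] = (A → ℂ)`. -/
def charFun (χ : A →* ℂ) : A → ℂ := fun a => χ a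

/-- The character `χ_M` of the `G`-representation `M`: the trace of the action of `g` on `M`. -/
def repChar (H : Subgroup (MulAut A)) (M : Submodule ℂ (A → ℂ)) (hM : IsSubrep H M)
    (g : Gsd H) : ℂ :=
  LinearMap.trace ℂ ↥M ((rho H g).restrict (fun x hx => hM g x hx))

/-!
On the basis `Φ` of `M`, an element `g = (a, h)` of `G` acts monomially,
`χ ↦ χ(h⁻¹ a) • (χ ∘ h⁻¹)`, so `χ_M(g)` is the sum of `χ(h⁻¹ a)` over the `χ ∈ Φ` fixed by `h`.
Since `τ` commutes with precomposition by `h`, a `τ` permuting `Φ` permutes these fixed characters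
and hence fixes `χ_M`. Conversely, on `A ⊆ G` the character `χ_M` is `∑_{χ ∈ Φ} χ`, so
`τ ∘ χ_M = χ_M` says that `τ Φ` and `Φ` have the same sum, and linear independence of characters
forces `τ Φ = Φ`.
-/

open Finset

theorem LinearIndependent.finset_sum_injective {ι R M : Type*} [CommRing R] [Nontrivial R]
    [AddCommGroup M] [Module R M] {v : ι → M} (hv : LinearIndependent R v) :
    Function.Injective fun s : Finset ι => ∑ i ∈ s, v i := by
  classical
  intro s t hst
  have hsum : ∀ s : Finset ι,
      ∑ i ∈ s, v i = Finsupp.linearCombination R v (∑ i ∈ s, Finsupp.single i 1) := by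
    simp [map_sum]
  have h := hv.finsuppLinearCombination_injective
    ((hsum s).symm.trans (hst.trans (hsum t)))
  ext j
  have hj := DFunLike.congr_fun h j
  simp only [Finsupp.finsetSum_apply, Finsupp.single_apply, sum_ite_eq'] at hj
  by_cases hs : j ∈ s <;> by_cases ht : j ∈ t <;> simp [hs, ht] at hj ⊢

theorem LinearMap.trace_eq_sum_of_apply_basis_eq_smul {ι R M : Type*} [CommRing R]
    [AddCommGroup M] [Module R M] [Fintype ι] [DecidableEq ι] (b : Module.Basis ι R M)
    (f : M →ₗ[R] M) (π : ι → ι) (c : ι → R) (hf : ∀ i, f (b i) = c i • b (π i)) :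
    LinearMap.trace R M f = ∑ i with π i = i, c i := by
  rw [LinearMap.trace_eq_matrix_trace R b, Matrix.trace, sum_filter]
  refine sum_congr rfl fun i _ => ?_
  simp [LinearMap.toMatrix_apply, hf, Finsupp.single_apply]

section GaloisConjugate

variable {G : Type*} [Monoid G] {K : IntermediateField ℚ ℂ} (τ : K ≃ₐ[ℚ] K)

open scoped Classical in
/-- `τ ∘ χ` for a character `χ` with values in `K`; a character taking some value outside `K`
is left unchanged, which makes `galConj τ` injective on all characters. -/
def galConj (χ : G →* ℂ) : G →* ℂ :=
  if hχ : ∀ a, χ a ∈ K then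
    K.val.toMonoidHom.comp ((τ : K →* K).comp (χ.codRestrict K hχ))
  else χ

variable {τ}

theorem galConj_apply {χ : G →* ℂ} (hχ : ∀ a, χ a ∈ K) (a : G) :
    galConj τ χ a = τ ⟨χ a, hχ a⟩ := by
  rw [galConj, dif_pos hχ]
  rfl

theorem galConj_apply_mem_iff {χ : G →* ℂ} : (∀ a, galConj τ χ a ∈ K) ↔ ∀ a, χ a ∈ K := by
  by_cases hχ : ∀ a, χ a ∈ K
  · simp only [galConj_apply hχ, SetLike.coe_mem, implies_true, hχ]
  · rw [galConj, dif_neg hχ]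

theorem galConj_injective : Function.Injective (galConj τ : (G →* ℂ) → G →* ℂ) := by
  intro χ χ' h
  by_cases hχ : ∀ a, χ a ∈ K
  · have hχ' : ∀ a, χ' a ∈ K := galConj_apply_mem_iff.mp (h ▸ galConj_apply_mem_iff.mpr hχ)
    ext a
    have ha := DFunLike.congr_fun h a
    rw [galConj_apply hχ, galConj_apply hχ'] at ha
    exact congrArg Subtype.val (τ.injective (Subtype.ext ha))
  · have hχ' : ¬ ∀ a, χ' a ∈ K := fun hχ' =>
      hχ (galConj_apply_mem_iff.mp (h ▸ galConj_apply_mem_iff.mpr hχ'))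
    rwa [galConj, galConj, dif_neg hχ, dif_neg hχ'] at h

theorem galConj_comp {G' : Type*} [Monoid G'] {χ : G →* ℂ} (hχ : ∀ a, χ a ∈ K) (f : G' →* G) :
    galConj τ (χ.comp f) = (galConj τ χ).comp f := by
  ext a
  rw [MonoidHom.comp_apply, galConj_apply hχ, galConj_apply fun a => hχ (f a)]
  rfl

theorem galConj_sum_apply {S : Finset (G →* ℂ)} (hS : ∀ χ ∈ S, ∀ a, χ a ∈ K) (a : G) (z : K)
    (hz : (z : ℂ) = ∑ χ ∈ S, χ a) : (τ z : ℂ) = ∑ χ ∈ S, galConj τ χ a := by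
  have hsplit : z = ∑ χ ∈ S.attach, ⟨χ.1 a, hS χ.1 χ.2 a⟩ := by
    apply Subtype.ext
    rw [hz, AddSubmonoidClass.coe_finsetSum]
    exact (sum_attach S fun χ => χ a).symm
  rw [hsplit, map_sum, AddSubmonoidClass.coe_finsetSum, ← sum_attach S fun χ => galConj τ χ a]
  exact sum_congr rfl fun χ _ => (galConj_apply (hS χ.1 χ.2) a).symm

theorem image_galConj_eq_of_mapsTo [DecidableEq (G →* ℂ)] {S : Finset (G →* ℂ)}
    (hS : ∀ χ ∈ S, galConj τ χ ∈ S) : S.image (galConj τ) = S :=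
  eq_of_subset_of_card_le (image_subset_iff.mpr hS) (card_image_of_injective S galConj_injective).ge

theorem image_galConj_eq_iff [DecidableEq (G →* ℂ)] {S : Finset (G →* ℂ)}
    (hS : ∀ χ ∈ S, ∀ a, χ a ∈ K) :
    S.image (galConj τ) = S ↔
      (∀ χ, ∀ hχ : χ ∈ S, ∃ χ' ∈ S, ∀ a, (τ ⟨χ a, hS χ hχ a⟩ : ℂ) = χ' a) ∧
      (∀ χ' ∈ S, ∃ χ, ∃ hχ : χ ∈ S, ∀ a, (τ ⟨χ a, hS χ hχ a⟩ : ℂ) = χ' a) := by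
  simp only [← galConj_apply, ← MonoidHom.ext_iff]
  constructor
  · intro h
    refine ⟨fun χ hχ => ⟨_, h ▸ mem_image_of_mem _ hχ, rfl⟩, fun χ' hχ' => ?_⟩
    obtain ⟨χ, hχ, rfl⟩ := mem_image.mp (h.symm ▸ hχ')
    exact ⟨χ, hχ, rfl⟩
  · rintro ⟨hmaps, -⟩
    refine image_galConj_eq_of_mapsTo fun χ hχ => ?_
    obtain ⟨χ', hχ', h⟩ := hmaps χ hχ
    exact h ▸ hχ'

theorem image_galConj_eq_of_sum_galConj_eq [DecidableEq (G →* ℂ)] {S : Finset (G →* ℂ)}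
    (h : ∀ a, ∑ χ ∈ S, galConj τ χ a = ∑ χ ∈ S, χ a) : S.image (galConj τ) = S := by
  apply (linearIndependent_monoidHom G ℂ).finset_sum_injective
  ext a
  simp only [Finset.sum_apply, sum_image galConj_injective.injOn, h]

theorem sum_filter_galConj_eq [DecidableEq (G →* ℂ)] {S : Finset (G →* ℂ)}
    (hK : ∀ χ ∈ S, ∀ a, χ a ∈ K) (hS : ∀ χ ∈ S, galConj τ χ ∈ S) (f : G →* G) (a : G) :
    ∑ χ ∈ S with χ.comp f = χ, galConj τ χ a = ∑ χ ∈ S with χ.comp f = χ, χ a := by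
  have hmaps : ∀ χ ∈ S.filter fun χ => χ.comp f = χ,
      galConj τ χ ∈ S.filter fun χ => χ.comp f = χ := by
    intro χ hχ
    rw [mem_filter] at hχ ⊢
    exact ⟨hS χ hχ.1, by rw [← galConj_comp (hK χ hχ.1), hχ.2]⟩
  conv_rhs => rw [← image_galConj_eq_of_mapsTo hmaps]
  rw [sum_image galConj_injective.injOn]

end GaloisConjugate

section CharacterSpan

variable {Γ : Type*} [CommGroup Γ] {H : Subgroup (MulAut Γ)}

theorem linearIndependent_charFun : LinearIndependent ℂ (charFun : (Γ →* ℂ) → Γ → ℂ) :=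
  linearIndependent_monoidHom Γ ℂ

theorem rho_charFun (g : Gsd H) (χ : Γ →* ℂ) :
    rho H g (charFun χ) = χ ((g.right : MulAut Γ)⁻¹ g.left) •
      charFun (χ.comp ((g.right : MulAut Γ)⁻¹).toMonoidHom) := by
  funext x
  simp only [rho, charFun, LinearMap.coe_mk, AddHom.coe_mk, map_mul, Pi.smul_apply, smul_eq_mul,
    MonoidHom.comp_apply, MulEquiv.coe_toMonoidHom, mul_comm]

theorem comp_mem_of_isSubrep {Φ : Set (Γ →* ℂ)}
    (hM : IsSubrep H (Submodule.span ℂ (charFun '' Φ))) {χ : Γ →* ℂ} (hχ : χ ∈ Φ) (g : Gsd H) :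
    χ.comp ((g.right : MulAut Γ)⁻¹).toMonoidHom ∈ Φ := by
  have hmem := hM g _ (Submodule.subset_span ⟨χ, hχ, rfl⟩)
  rw [rho_charFun, Submodule.smul_mem_iff _ (show χ _ ≠ 0 from (χ.toHomUnits _).ne_zero)] at hmem
  by_contra h
  exact linearIndependent_charFun.notMem_span_image h hmem

def charBasis (Φ : Finset (Γ →* ℂ)) :
    Module.Basis Φ ℂ (Submodule.span ℂ (charFun '' (Φ : Set (Γ →* ℂ)))) :=
  (Module.Basis.span
      (linearIndependent_charFun.comp (Subtype.val : Φ → Γ →* ℂ) Subtype.val_injective)).map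
    (LinearEquiv.ofEq _ _ (by rw [Set.image_eq_range]; rfl))

theorem charBasis_apply (Φ : Finset (Γ →* ℂ)) (χ : Φ) :
    (charBasis Φ χ : Γ → ℂ) = charFun χ.1 := by
  simp [charBasis, Module.Basis.span_apply]

theorem repChar_span_charFun [DecidableEq (Γ →* ℂ)] (Φ : Finset (Γ →* ℂ))
    (hM : IsSubrep H (Submodule.span ℂ (charFun '' (Φ : Set (Γ →* ℂ))))) (g : Gsd H) :
    repChar H _ hM g = ∑ χ ∈ Φ with χ.comp ((g.right : MulAut Γ)⁻¹).toMonoidHom = χ,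
      χ ((g.right : MulAut Γ)⁻¹ g.left) := by
  have hbasis : ∀ χ : Φ, (rho H g).restrict (fun f hf => hM g f hf) (charBasis Φ χ) =
      χ.1 ((g.right : MulAut Γ)⁻¹ g.left) •
        charBasis Φ ⟨_, comp_mem_of_isSubrep hM χ.2 g⟩ := by
    intro χ
    ext1
    simp only [LinearMap.coe_restrict_apply, SetLike.val_smul, charBasis_apply, rho_charFun]
  rw [repChar, LinearMap.trace_eq_sum_of_apply_basis_eq_smul _ _ _ _ hbasis, sum_filter,
    sum_filter]
  simp only [Subtype.ext_iff]
  exact sum_coe_sort Φ fun χ => if χ.comp ((g.right : MulAut Γ)⁻¹).toMonoidHom = χ then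
    χ ((g.right : MulAut Γ)⁻¹ g.left) else 0

theorem repChar_span_charFun_inl (Φ : Finset (Γ →* ℂ))
    (hM : IsSubrep H (Submodule.span ℂ (charFun '' (Φ : Set (Γ →* ℂ))))) (a : Γ) :
    repChar H _ hM (SemidirectProduct.inl a) = ∑ χ ∈ Φ, χ a := by
  classical
  have hright : ((SemidirectProduct.inl a : Gsd H).right : MulAut Γ)⁻¹ = 1 := by simp
  rw [repChar_span_charFun, hright, sum_filter]
  exact sum_congr rfl fun χ _ => if_pos rfl

end CharacterSpan

theorem statement_7_general (H : Subgroup (MulAut A)) (Φ : Finset (A →* ℂ))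
    (M : Submodule ℂ (A → ℂ)) (hMdef : M = Submodule.span ℂ (charFun '' ↑Φ))
    (hM : IsSubrep H M)
    (K : IntermediateField ℚ ℂ)
    (hvals : ∀ χ ∈ Φ, ∀ a : A, χ a ∈ K)
    (τ : K ≃ₐ[ℚ] K) :
    ∃ hval : ∀ g : Gsd H, repChar H M hM g ∈ K,
      ((∀ g : Gsd H, (τ ⟨repChar H M hM g, hval g⟩ : ℂ) = repChar H M hM g) ↔
        ((∀ χ, ∀ hχ : χ ∈ Φ, ∃ χ' ∈ Φ, ∀ a : A,
            (τ ⟨χ a, hvals χ hχ a⟩ : ℂ) = χ' a) ∧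
         (∀ χ' ∈ Φ, ∃ χ, ∃ hχ : χ ∈ Φ, ∀ a : A,
            (τ ⟨χ a, hvals χ hχ a⟩ : ℂ) = χ' a))) := by
  classical
  subst hMdef
  have hval : ∀ g : Gsd H, repChar H _ hM g ∈ K := fun g => by
    rw [repChar_span_charFun]
    exact sum_mem fun χ hχ => hvals χ (mem_filter.mp hχ).1 _
  refine ⟨hval, ?_⟩
  rw [← image_galConj_eq_iff hvals]
  constructor
  · intro hfix
    refine image_galConj_eq_of_sum_galConj_eq fun a => ?_
    rw [← galConj_sum_apply hvals a ⟨_, hval (.inl a)⟩ (repChar_span_charFun_inl Φ hM a), hfix,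
      repChar_span_charFun_inl]
  · intro himage g
    have hmaps : ∀ χ ∈ Φ, galConj τ χ ∈ Φ := fun χ hχ => himage ▸ mem_image_of_mem _ hχ
    rw [galConj_sum_apply (fun χ hχ => hvals χ (mem_filter.mp hχ).1) _ ⟨_, hval g⟩
      (repChar_span_charFun Φ hM g), sum_filter_galConj_eq hvals hmaps, repChar_span_charFun]

/-- Let `e` be the exponent of `A` and `M = span(Φ)` an irreducible
`G`-subrepresentation of `ℂ[A]` spanned by a set `Φ` of characters of `A` (whose values lie in
the cyclotomic field `K = ℚ(ζ_e) ⊆ ℂ`).  Then the character `χ_M` of `M` takes values in `K`,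
and for `τ ∈ Gal(ℚ(ζ_e)/ℚ)` one has `τ∘χ_M = χ_M` if and only if `τ` permutes the elements of
`Φ`, i.e. `{τ∘χ : χ ∈ Φ} = Φ`. -/
theorem statement_7 (H : Subgroup (MulAut A)) (Φ : Finset (A →* ℂ))
    (M : Submodule ℂ (A → ℂ)) (hMdef : M = Submodule.span ℂ (charFun '' ↑Φ))
    (hM : IsSubrep H M) (hMirr : IsIrred H M)
    (e : ℕ) (he : e = Monoid.exponent A) (ζ : ℂ) (hζ : IsPrimitiveRoot ζ e)
    (K : IntermediateField ℚ ℂ) (hK : K = IntermediateField.adjoin ℚ {ζ})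
    (hvals : ∀ χ ∈ Φ, ∀ a : A, χ a ∈ K)
    (τ : K ≃ₐ[ℚ] K) :
    ∃ hval : ∀ g : Gsd H, repChar H M hM g ∈ K,
      ((∀ g : Gsd H, (τ ⟨repChar H M hM g, hval g⟩ : ℂ) = repChar H M hM g) ↔
        ((∀ χ, ∀ hχ : χ ∈ Φ, ∃ χ' ∈ Φ, ∀ a : A,
            (τ ⟨χ a, hvals χ hχ a⟩ : ℂ) = χ' a) ∧
         (∀ χ' ∈ Φ, ∃ χ, ∃ hχ : χ ∈ Φ, ∀ a : A,
            (τ ⟨χ a, hvals χ hχ a⟩ : ℂ) = χ' a))) :=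
  statement_7_general H Φ M hMdef hM K hvals τ
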